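/- arXiv:2208.11841 — 13 statements merged into one kernel-verified Lean document; each statement's English description precedes it below -/
import Mathlib

section
/- Let A be a finite-dimensional pre-Malcev algebra over a field F of characteristic zero and let r ∈ A ⊗ A be a symmetric element. Then r is a solution of the analogue of the classical Yang–Baxter equation on A if and only if T_r is an O-operator of A associated to the bimodule (A*; L* − R*, −R*), i.e. T_r(η)·T_r(ζ) = T_r((L*_{T_r(η)} − R*_{T_r(η)})(ζ)) + T_r(−R*_{T_r(ζ)}(η)) for all η, ζ ∈ A*. -/
open TensorProduct

section Defs

variable {F : Type*} [Field F]
variable {A : Type*} [AddCommGroup A] [Module F A]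
variable {V : Type*} [AddCommGroup V] [Module F V]

/-- The pre-Malcev identity for a (curried) bilinear product. -/
def PreMalcevFn {A : Type*} [AddCommGroup A] (mul : A → A → A) : Prop :=
  ∀ x y z t : A,
    mul (mul y z) (mul x t) - mul (mul z y) (mul x t)
      + mul (mul (mul x y) z) t - mul (mul (mul y x) z) t
      - mul (mul z (mul x y)) t + mul (mul z (mul y x)) t
      + mul y (mul (mul x z) t) - mul y (mul (mul z x) t)
      - mul x (mul y (mul z t)) + mul z (mul x (mul y t)) = 0

/-- The semidirect-product multiplication on `A × V`. -/
def sdFn (mul : A →ₗ[F] A →ₗ[F] A) (l r : A →ₗ[F] Module.End F V) :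
    A × V → A × V → A × V :=
  fun p q => (mul p.1 q.1, l p.1 q.2 + r q.1 p.2)

/-- `(V; l, r)` is a bimodule of the pre-Malcev algebra `(A, mul)` iff the semidirect
product `A ⋉ V` is again a pre-Malcev algebra. -/
def IsBimodule (mul : A →ₗ[F] A →ₗ[F] A) (l r : A →ₗ[F] Module.End F V) : Prop :=
  PreMalcevFn (sdFn mul l r)

/-- `T` is an O-operator of `(A, mul)` associated to the bimodule `(V; l, r)`. -/
def IsOOp (mul : A →ₗ[F] A →ₗ[F] A) (l r : A →ₗ[F] Module.End F V)
    (T : V →ₗ[F] A) : Prop :=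
  ∀ v w : V, mul (T v) (T w) = T (l (T v) w + r (T w) v)

/-- Two O-operators are compatible if every linear combination is again an O-operator. -/
def Compatible (mul : A →ₗ[F] A →ₗ[F] A) (l r : A →ₗ[F] Module.End F V)
    (T₁ T₂ : V →ₗ[F] A) : Prop :=
  ∀ k₁ k₂ : F, IsOOp mul l r (k₁ • T₁ + k₂ • T₂)

/-- `N` is a Nijenhuis operator for the product `mul`. -/
def IsNijenhuisFn (mul : A → A → A) (N : A →ₗ[F] A) : Prop :=
  ∀ x y : A, mul (N x) (N y) = N (mul (N x) y + mul x (N y) - N (mul x y))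

/-- The dual map `ℓ* : A → End(V*)`, `⟨ℓ*_x ξ, v⟩ = -⟨ξ, ℓ_x v⟩`. -/
def dualRep (l : A →ₗ[F] Module.End F V) :
    A →ₗ[F] Module.End F (Module.Dual F V) where
  toFun x := -(l x).dualMap
  map_add' x y := by ext ξ v; simp; abel
  map_smul' c x := by ext ξ v; simp

/-- The map `ℓ* - 𝔯* : A → End(V*)`, i.e. `x ↦ ℓ*_x - 𝔯*_x`; it is equal to
`dualRep l - dualRep r`. -/
def dualRepSub (l r : A →ₗ[F] Module.End F V) :
    A →ₗ[F] Module.End F (Module.Dual F V) where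
  toFun x := -(l x).dualMap - -((r x).dualMap)
  map_add' x y := by ext ξ v; simp; abel
  map_smul' c x := by ext ξ v; simp

/-- The map `-𝔯* : A → End(V*)`, i.e. `x ↦ -(𝔯*_x)`; it is equal to `-(dualRep r)`. -/
def dualRepNeg (r : A →ₗ[F] Module.End F V) :
    A →ₗ[F] Module.End F (Module.Dual F V) where
  toFun x := -(-((r x).dualMap))
  map_add' x y := by ext ξ v; simp
  map_smul' c x := by ext ξ v; simp

/-- The semidirect-product multiplication as a bundled bilinear map. -/
def sdMul (mul : A →ₗ[F] A →ₗ[F] A) (l r : A →ₗ[F] Module.End F V) :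
    (A × V) →ₗ[F] (A × V) →ₗ[F] (A × V) :=
  LinearMap.mk₂ F (sdFn mul l r)
    (fun p p' q => by
      apply Prod.ext <;> simp [sdFn, map_add] <;> abel)
    (fun c p q => by
      apply Prod.ext <;> simp [sdFn, map_smul, smul_add])
    (fun p q q' => by
      apply Prod.ext <;> simp [sdFn, map_add] <;> abel)
    (fun c p q => by
      apply Prod.ext <;> simp [sdFn, map_smul, smul_add])

/-- The left-hand side `-r₁₂·r₁₃ + r₁₂·r₂₃ + [r₁₃, r₂₃]` of the analogue of the
classical Yang-Baxter equation on a pre-Malcev algebra `(B, mul)`. -/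
noncomputable def cybeLHS {B : Type*} [AddCommGroup B] [Module F B]
    (mul : B →ₗ[F] B →ₗ[F] B) (r : B ⊗[F] B) : B ⊗[F] (B ⊗[F] B) :=
  -(TensorProduct.map (TensorProduct.lift mul) LinearMap.id
      (TensorProduct.tensorTensorTensorComm F B B B B (r ⊗ₜ[F] r)))
  + TensorProduct.map LinearMap.id (TensorProduct.map (TensorProduct.lift mul) LinearMap.id)
      (TensorProduct.map LinearMap.id (TensorProduct.assoc F B B B).symm.toLinearMap
        (TensorProduct.assoc F B B (B ⊗[F] B) (r ⊗ₜ[F] r)))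
  + TensorProduct.map LinearMap.id (TensorProduct.map LinearMap.id
      (TensorProduct.lift mul - TensorProduct.lift mul ∘ₗ (TensorProduct.comm F B B).toLinearMap))
      (TensorProduct.assoc F B B (B ⊗[F] B)
        (TensorProduct.tensorTensorTensorComm F B B B B (r ⊗ₜ[F] r)))

/-- `r` is a solution of the analogue of the CYBE on `(B, mul)`. -/
noncomputable def IsCYBE {B : Type*} [AddCommGroup B] [Module F B]
    (mul : B →ₗ[F] B →ₗ[F] B) (r : B ⊗[F] B) : Prop :=
  cybeLHS mul r = 0

/-- The linear map `T_r : A* → A` associated to `r ∈ A ⊗ A`,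
`⟨f, T_r g⟩ = ⟨f ⊗ g, r⟩`. -/
noncomputable def trMap (r : A ⊗[F] A) : Module.Dual F A →ₗ[F] A :=
  dualTensorHom F (Module.Dual F A) A
    (TensorProduct.map (Module.Dual.eval F A) LinearMap.id
      (TensorProduct.comm F A A r))

/-- The product `⋄^T` on `V` induced by a linear map `T : V → A`. -/
def dia (l r : A →ₗ[F] Module.End F V) (T : V →ₗ[F] A) : V → V → V :=
  fun u v => l (T u) v + r (T v) u

/-- The deformation `⋄^T_S` of `⋄^T` by `S`. -/
def diaS (l r : A →ₗ[F] Module.End F V) (T : V →ₗ[F] A) (S : V →ₗ[F] V) : V → V → V :=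
  fun u v => dia l r T (S u) v + dia l r T u (S v) - S (dia l r T u v)

/-- `(N, S)` is a Nijenhuis pair on `(A, mul)` with bimodule `(V; l, r)`. -/
def IsNijPair (mul : A →ₗ[F] A →ₗ[F] A) (l r : A →ₗ[F] Module.End F V)
    (N : A →ₗ[F] A) (S : V →ₗ[F] V) : Prop :=
  IsNijenhuisFn (fun x y => mul x y) N ∧
  (∀ (x : A) (v : V), l (N x) (S v) = S (l (N x) v + l x (S v) - S (l x v))) ∧
  (∀ (x : A) (v : V), r (N x) (S v) = S (r (N x) v + r x (S v) - S (r x v)))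

/-- `(N, S)` is a dual-Nijenhuis pair on `(A, mul)` with bimodule `(V; l, r)`. -/
def IsDualNijPair (mul : A →ₗ[F] A →ₗ[F] A) (l r : A →ₗ[F] Module.End F V)
    (N : A →ₗ[F] A) (S : V →ₗ[F] V) : Prop :=
  IsNijenhuisFn (fun x y => mul x y) N ∧
  (∀ (x : A) (v : V), l (N x) (S v) = S (l (N x) v) + l x (S (S v)) - S (l x (S v))) ∧
  (∀ (x : A) (v : V), r (N x) (S v) = S (r (N x) v) + r x (S (S v)) - S (r x (S v)))

/-- `(N, S)` is a perfect Nijenhuis pair. -/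
def IsPerfectNijPair (mul : A →ₗ[F] A →ₗ[F] A) (l r : A →ₗ[F] Module.End F V)
    (N : A →ₗ[F] A) (S : V →ₗ[F] V) : Prop :=
  IsNijPair mul l r N S ∧
  (∀ (x : A) (v : V), S (S (l x v)) + l x (S (S v)) = (2 : F) • S (l x (S v))) ∧
  (∀ (x : A) (v : V), S (S (r x v)) + r x (S (S v)) = (2 : F) • S (r x (S v)))

/-- `(T, N, S)` is an O-N structure on `(A, mul)` with bimodule `(V; l, r)`. -/
def IsONStruct (mul : A →ₗ[F] A →ₗ[F] A) (l r : A →ₗ[F] Module.End F V)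
    (T : V →ₗ[F] A) (N : A →ₗ[F] A) (S : V →ₗ[F] V) : Prop :=
  IsOOp mul l r T ∧ IsNijPair mul l r N S ∧ N ∘ₗ T = T ∘ₗ S ∧
  ∀ u v : V, dia l r (N ∘ₗ T) u v = diaS l r T S u v

/-- `(T, N, S)` is an O-dual-N structure on `(A, mul)` with bimodule `(V; l, r)`. -/
def IsODualNStruct (mul : A →ₗ[F] A →ₗ[F] A) (l r : A →ₗ[F] Module.End F V)
    (T : V →ₗ[F] A) (N : A →ₗ[F] A) (S : V →ₗ[F] V) : Prop :=
  IsOOp mul l r T ∧ IsDualNijPair mul l r N S ∧ N ∘ₗ T = T ∘ₗ S ∧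
  ∀ u v : V, dia l r (N ∘ₗ T) u v = diaS l r T S u v

end Defs

/-! Contracting the last two factors of `A ⊗ A ⊗ A` against covectors `f, g ∈ A*` is injective
when `A` is finite-dimensional, so the CYBE holds iff all these contractions vanish. The CYBE
expression is quadratic in `r`; polarizing it to a linear map of `r ⊗ s` reduces the computation
of its contractions to pure tensors, where the contraction at `(f, g)` is
`T_r((L* - R*)_{T_{σ s} f} g - R*_{T_s g} f) - T_r f · T_s g`. For symmetric `r` and `s = r`
this is the defect of the O-operator identity of `T_r` at `(f, g)`. -/

section Contraction

variable {R A : Type*} [CommRing R] [AddCommGroup A] [Module R A]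

noncomputable def contractDual (N : Type*) [AddCommGroup N] [Module R N] :
    A ⊗[R] N →ₗ[R] Module.Dual R A →ₗ[R] N :=
  dualTensorHom R (Module.Dual R A) N ∘ₗ (Module.Dual.eval R A).rTensor N

@[simp] lemma contractDual_tmul {N : Type*} [AddCommGroup N] [Module R N]
    (x : A) (n : N) (f : Module.Dual R A) :
    contractDual N (x ⊗ₜ[R] n) f = f x • n := by
  simp [contractDual]

lemma contractDual_injective [Module.Finite R A] [Module.Projective R A]
    (N : Type*) [AddCommGroup N] [Module R N] :
    Function.Injective (contractDual (R := R) (A := A) N) := by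
  have heval : Function.Injective ((Module.Dual.eval R A).rTensor N) := by
    rw [← Module.evalEquiv_toLinearMap, ← LinearEquiv.coe_rTensor]
    exact (LinearEquiv.rTensor N (Module.evalEquiv R A)).injective
  exact dualTensorHom_bijective.1.comp heval

noncomputable def contractDual₂ :
    A ⊗[R] (A ⊗[R] A) →ₗ[R] Module.Dual R A →ₗ[R] Module.Dual R A →ₗ[R] A :=
  LinearMap.llcomp R (Module.Dual R A) (A ⊗[R] A) (Module.Dual R A →ₗ[R] A)
      (contractDual A) ∘ₗ
    contractDual (A ⊗[R] A) ∘ₗ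
    (TensorProduct.assoc R A A A).toLinearMap ∘ₗ (TensorProduct.comm R A (A ⊗[R] A)).toLinearMap

@[simp] lemma contractDual₂_tmul (a b c : A) (f g : Module.Dual R A) :
    contractDual₂ (a ⊗ₜ[R] (b ⊗ₜ[R] c)) f g = f b • g c • a := by
  simp [contractDual₂]

lemma contractDual₂_injective [Module.Finite R A] [Module.Projective R A] :
    Function.Injective (contractDual₂ (R := R) (A := A)) := by
  have hpost : Function.Injective (LinearMap.llcomp R (Module.Dual R A) (A ⊗[R] A)
      (Module.Dual R A →ₗ[R] A) (σ₁₂ := RingHom.id R) (σ₁₃ := RingHom.id R)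
      (contractDual A)) := fun φ ψ h =>
    LinearMap.ext fun f => contractDual_injective A (LinearMap.congr_fun h f)
  simp only [contractDual₂, LinearMap.coe_comp, LinearEquiv.coe_coe]
  exact hpost.comp <| (contractDual_injective _).comp <|
    (TensorProduct.assoc R A A A).injective.comp (TensorProduct.comm R A (A ⊗[R] A)).injective

end Contraction

section YangBaxter

variable {F A : Type*} [Field F] [AddCommGroup A] [Module F A]

lemma trMap_eq_contractDual (r : A ⊗[F] A) :
    trMap r = contractDual A (TensorProduct.comm F A A r) :=
  rfl

@[simp] lemma trMap_tmul (x y : A) (f : Module.Dual F A) :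
    trMap (x ⊗ₜ[F] y) f = f y • x := by
  simp [trMap_eq_contractDual]

@[simp] lemma trMap_zero : trMap (0 : A ⊗[F] A) = 0 := by
  simp only [trMap_eq_contractDual, map_zero]

lemma trMap_add (r s : A ⊗[F] A) : trMap (r + s) = trMap r + trMap s := by
  simp only [trMap_eq_contractDual, map_add]

noncomputable def cybeMap (mul : A →ₗ[F] A →ₗ[F] A) :
    (A ⊗[F] A) ⊗[F] (A ⊗[F] A) →ₗ[F] A ⊗[F] (A ⊗[F] A) :=
  -(TensorProduct.map (TensorProduct.lift mul) LinearMap.id ∘ₗ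
      (TensorProduct.tensorTensorTensorComm F A A A A).toLinearMap)
  + (TensorProduct.map LinearMap.id
      (TensorProduct.map (TensorProduct.lift mul) LinearMap.id) ∘ₗ
      TensorProduct.map LinearMap.id (TensorProduct.assoc F A A A).symm.toLinearMap ∘ₗ
      (TensorProduct.assoc F A A (A ⊗[F] A)).toLinearMap)
  + (TensorProduct.map LinearMap.id (TensorProduct.map LinearMap.id
      (TensorProduct.lift mul -
        TensorProduct.lift mul ∘ₗ (TensorProduct.comm F A A).toLinearMap)) ∘ₗ
      (TensorProduct.assoc F A A (A ⊗[F] A)).toLinearMap ∘ₗ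
      (TensorProduct.tensorTensorTensorComm F A A A A).toLinearMap)

lemma cybeLHS_eq_cybeMap (mul : A →ₗ[F] A →ₗ[F] A) (r : A ⊗[F] A) :
    cybeLHS mul r = cybeMap mul (r ⊗ₜ[F] r) :=
  rfl

lemma contractDual₂_cybeMap_tmul (mul : A →ₗ[F] A →ₗ[F] A) (r s : A ⊗[F] A)
    (f g : Module.Dual F A) :
    contractDual₂ (cybeMap mul (r ⊗ₜ[F] s)) f g =
      -mul (trMap r f) (trMap s g)
        + trMap r (dualRepSub mul mul.flip (trMap (TensorProduct.comm F A A s) f) g)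
        + trMap r (dualRepNeg mul.flip (trMap s g) f) := by
  induction r using TensorProduct.induction_on with
  | zero => simp
  | add r r' hr hr' =>
    simp only [TensorProduct.add_tmul, map_add, LinearMap.add_apply, trMap_add, hr, hr']
    abel
  | tmul x y =>
    induction s using TensorProduct.induction_on with
    | zero => simp
    | add s s' hs hs' =>
      simp only [TensorProduct.tmul_add, map_add, LinearMap.add_apply, trMap_add, hs, hs']
      abel
    | tmul z w =>
      simp only [cybeMap, LinearEquiv.comp_coe, LinearMap.add_apply, LinearMap.neg_apply,
        LinearMap.coe_comp, LinearEquiv.coe_coe, Function.comp_apply, tensorTensorTensorComm_tmul,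
        map_tmul, lift.tmul, LinearMap.id_coe, id_eq, assoc_tmul, assoc_symm_tmul,
        LinearEquiv.trans_apply, LinearMap.sub_apply, comm_tmul, map_add, map_neg,
        contractDual₂_tmul, smul_smul, map_sub, trMap_tmul, map_smul, LinearMap.smul_apply,
        dualRepSub, LinearMap.coe_mk, AddHom.coe_mk, sub_neg_eq_add, smul_add, smul_neg,
        LinearMap.dualMap_apply, LinearMap.flip_apply, dualRepNeg, neg_neg]
      module

lemma contractDual₂_cybeLHS_of_comm_eq (mul : A →ₗ[F] A →ₗ[F] A) {r : A ⊗[F] A}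
    (hr : TensorProduct.comm F A A r = r) (f g : Module.Dual F A) :
    contractDual₂ (cybeLHS mul r) f g =
      trMap r (dualRepSub mul mul.flip (trMap r f) g + dualRepNeg mul.flip (trMap r g) f)
        - mul (trMap r f) (trMap r g) := by
  rw [cybeLHS_eq_cybeMap, contractDual₂_cybeMap_tmul, hr, map_add]
  abel

end YangBaxter

theorem stmt0_general {F A : Type*} [Field F] [AddCommGroup A] [Module F A]
    [FiniteDimensional F A]
    (mul : A →ₗ[F] A →ₗ[F] A)
    (r : A ⊗[F] A) (hr : TensorProduct.comm F A A r = r) :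
    IsCYBE mul r ↔
      IsOOp mul (dualRepSub mul mul.flip) (dualRepNeg mul.flip) (trMap r) := by
  rw [IsCYBE, ← LinearMap.map_eq_zero_iff _ contractDual₂_injective]
  simp only [LinearMap.ext_iff, LinearMap.zero_apply, contractDual₂_cybeLHS_of_comm_eq mul hr,
    sub_eq_zero, IsOOp]
  exact forall₂_congr fun _ _ => eq_comm

/-- a symmetric `r ∈ A ⊗ A` is a solution of the analogue of the CYBE on a
finite-dimensional pre-Malcev algebra `A` over a field of characteristic zero iff
`T_r` is an O-operator associated to the bimodule `(A*; L* - R*, -R*)`. -/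
theorem stmt0 {F A : Type*} [Field F] [CharZero F] [AddCommGroup A] [Module F A]
    [FiniteDimensional F A]
    (mul : A →ₗ[F] A →ₗ[F] A) (hA : PreMalcevFn fun x y => mul x y)
    (r : A ⊗[F] A) (hr : TensorProduct.comm F A A r = r) :
    IsCYBE mul r ↔
      IsOOp mul (dualRepSub mul mul.flip) (dualRepNeg mul.flip) (trMap r) :=
  stmt0_general mul r hr
end

section
/- Let (V; ℓ, 𝔯) be a bimodule of a finite-dimensional pre-Malcev algebra A over a field F of characteristic zero, with V finite-dimensional, and let T : V → A be a linear map. Fix a basis {v_1,…,v_n} of V with dual basis {ξ_1,…,ξ_n} of V*, and set s_T = Σ_i T(v_i) ⊗ ξ_i + Σ_i ξ_i ⊗ T(v_i) ∈ (A ⊕ V*) ⊗ (A ⊕ V*). Then T is an O-operator of A associated to (V; ℓ, 𝔯) if and only if s_T is a solution of the analogue of the classical Yang–Baxter equation on the semi-direct product pre-Malcev algebra A ⋉_{ℓ*−𝔯*, −𝔯*} V*. -/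
/-!
Pairing the CYBE expression of any `r ∈ B ⊗ B` with `f ⊗ g ⊗ h` gives
`-f (R g · R h) + g (L f · R h) + h [L f, L g]`, where `L, R : B* → B` contract `r` in its first,
resp. second, leg. A functional on `A ⋉ V*` is a pair `(α, u) ∈ A* × V`, and for `s_T` both
contractions send it to `(T u, α ∘ T)`. Expanding the semidirect product, the pairing with
`(α, u) ⊗ (β, v) ⊗ (γ, w)` becomes `-α (D v w) + β (D u w) + γ (D u v - D v u)`, where
`D v w = T v · T w - T (ℓ_{T v} w + 𝔯_{T w} v)` measures the failure of `T` to be an O-operator.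
Since functionals separate points of the finite-dimensional space `(A ⋉ V*)^{⊗3}`, `s_T` solves
the CYBE iff `D = 0`.
-/

open TensorProduct

section Contraction

variable {F B : Type*} [Field F] [AddCommGroup B] [Module F B]

theorem TensorProduct.dualDistrib_surjective
    {M N : Type*} [AddCommGroup M] [Module F M] [AddCommGroup N] [Module F N]
    [FiniteDimensional F M] [FiniteDimensional F N] :
    Function.Surjective (dualDistrib F M N) :=
  (dualDistribEquiv F M N).surjective

theorem TensorProduct.eq_zero_of_forall_dualDistrib_apply_eq_zero
    {M N : Type*} [AddCommGroup M] [Module F M] [AddCommGroup N] [Module F N]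
    [FiniteDimensional F M] [FiniteDimensional F N] {t : M ⊗[F] N}
    (h : ∀ f g, dualDistrib F M N (f ⊗ₜ g) t = 0) : t = 0 := by
  refine (Module.forall_dual_apply_eq_zero_iff F t).mp fun φ => ?_
  obtain ⟨ψ, rfl⟩ := TensorProduct.dualDistrib_surjective φ
  induction ψ using TensorProduct.induction_on with
  | zero => simp
  | tmul f g => exact h f g
  | add ψ₁ ψ₂ h₁ h₂ => simp [h₁, h₂]

noncomputable def tripleEval (f g h : Module.Dual F B) : B ⊗[F] (B ⊗[F] B) →ₗ[F] F :=
  dualDistrib F B (B ⊗[F] B) (f ⊗ₜ dualDistrib F B B (g ⊗ₜ h))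

@[simp] theorem tripleEval_tmul (f g h : Module.Dual F B) (x y z : B) :
    tripleEval f g h (x ⊗ₜ (y ⊗ₜ z)) = f x * (g y * h z) := rfl

theorem eq_zero_of_forall_tripleEval_eq_zero [FiniteDimensional F B] {t : B ⊗[F] (B ⊗[F] B)}
    (h : ∀ f g k, tripleEval f g k t = 0) : t = 0 := by
  refine TensorProduct.eq_zero_of_forall_dualDistrib_apply_eq_zero fun f φ => ?_
  obtain ⟨ψ, rfl⟩ := TensorProduct.dualDistrib_surjective φ
  induction ψ using TensorProduct.induction_on with
  | zero => simp
  | tmul g k => exact h f g k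
  | add ψ₁ ψ₂ h₁ h₂ => simp [tmul_add, h₁, h₂]

noncomputable def contrLeft (f : Module.Dual F B) : B ⊗[F] B →ₗ[F] B :=
  (TensorProduct.lid F B).toLinearMap ∘ₗ f.rTensor B

noncomputable def contrRight (f : Module.Dual F B) : B ⊗[F] B →ₗ[F] B :=
  (TensorProduct.rid F B).toLinearMap ∘ₗ f.lTensor B

@[simp] theorem contrLeft_tmul (f : Module.Dual F B) (x y : B) :
    contrLeft f (x ⊗ₜ y) = f x • y := rfl

@[simp] theorem contrRight_tmul (f : Module.Dual F B) (x y : B) :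
    contrRight f (x ⊗ₜ y) = f y • x := rfl

theorem contrRight_eq_contrLeft_comm (f : Module.Dual F B) (t : B ⊗[F] B) :
    contrRight f t = contrLeft f (TensorProduct.comm F B B t) := by
  induction t using TensorProduct.induction_on with
  | zero => simp
  | tmul x y => rfl
  | add t₁ t₂ h₁ h₂ => simp only [map_add, h₁, h₂]

-- The polarization of `cybeLHS`: `cybeLHS mul r = cybePolar mul r r` holds by `rfl`.
noncomputable def cybePolar (mul : B →ₗ[F] B →ₗ[F] B) (r s : B ⊗[F] B) : B ⊗[F] (B ⊗[F] B) :=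
  -(TensorProduct.map (TensorProduct.lift mul) LinearMap.id
      (TensorProduct.tensorTensorTensorComm F B B B B (r ⊗ₜ[F] s)))
  + TensorProduct.map LinearMap.id (TensorProduct.map (TensorProduct.lift mul) LinearMap.id)
      (TensorProduct.map LinearMap.id (TensorProduct.assoc F B B B).symm.toLinearMap
        (TensorProduct.assoc F B B (B ⊗[F] B) (r ⊗ₜ[F] s)))
  + TensorProduct.map LinearMap.id (TensorProduct.map LinearMap.id
      (TensorProduct.lift mul - TensorProduct.lift mul ∘ₗ (TensorProduct.comm F B B).toLinearMap))
      (TensorProduct.assoc F B B (B ⊗[F] B)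
        (TensorProduct.tensorTensorTensorComm F B B B B (r ⊗ₜ[F] s)))

theorem tripleEval_cybePolar (mul : B →ₗ[F] B →ₗ[F] B) (r s : B ⊗[F] B)
    (f g h : Module.Dual F B) :
    tripleEval f g h (cybePolar mul r s) =
      -f (mul (contrRight g r) (contrRight h s)) + g (mul (contrLeft f r) (contrRight h s))
        + h (mul (contrLeft f r) (contrLeft g s) - mul (contrLeft g s) (contrLeft f r)) := by
  induction r using TensorProduct.induction_on with
  | zero => simp [cybePolar]
  | add r₁ r₂ h₁ h₂ =>
    simp only [cybePolar, add_tmul, map_add, map_sub, neg_add, LinearMap.add_apply] at h₁ h₂ ⊢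
    linear_combination h₁ + h₂
  | tmul x y =>
    induction s using TensorProduct.induction_on with
    | zero => simp [cybePolar]
    | add s₁ s₂ h₁ h₂ =>
      simp only [cybePolar, tmul_add, map_add, map_sub, neg_add, LinearMap.add_apply] at h₁ h₂ ⊢
      linear_combination h₁ + h₂
    | tmul x' y' =>
      simp only [cybePolar, tensorTensorTensorComm_tmul, map_tmul, lift.tmul, LinearMap.id_coe,
        id_eq, assoc_tmul, LinearEquiv.coe_coe, assoc_symm_tmul, LinearMap.sub_apply,
        LinearMap.coe_comp, Function.comp_apply, comm_tmul, map_add, map_neg, tripleEval_tmul,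
        map_sub, contrRight_tmul, map_smul, LinearMap.smul_apply, smul_eq_mul, contrLeft_tmul]
      ring

theorem tripleEval_cybeLHS (mul : B →ₗ[F] B →ₗ[F] B) (r : B ⊗[F] B) (f g h : Module.Dual F B) :
    tripleEval f g h (cybeLHS mul r) =
      -f (mul (contrRight g r) (contrRight h r)) + g (mul (contrLeft f r) (contrRight h r))
        + h (mul (contrLeft f r) (contrLeft g r) - mul (contrLeft g r) (contrLeft f r)) :=
  tripleEval_cybePolar mul r r f g h

end Contraction

section Semidirect

variable {F A V : Type*} [Field F] [AddCommGroup A] [Module F A] [AddCommGroup V] [Module F V]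

def dualFst (f : Module.Dual F (A × Module.Dual F V)) : Module.Dual F A :=
  f ∘ₗ LinearMap.inl F A (Module.Dual F V)

noncomputable def dualSnd [FiniteDimensional F V] (f : Module.Dual F (A × Module.Dual F V)) : V :=
  (Module.evalEquiv F V).symm (f ∘ₗ LinearMap.inr F A (Module.Dual F V))

theorem dual_prod_apply_zero_mk [FiniteDimensional F V] (f : Module.Dual F (A × Module.Dual F V))
    (η : Module.Dual F V) : f (0, η) = η (dualSnd f) := by
  simp [dualSnd]

theorem dual_prod_apply_mk [FiniteDimensional F V] (f : Module.Dual F (A × Module.Dual F V))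
    (a : A) (η : Module.Dual F V) : f (a, η) = dualFst f a + η (dualSnd f) := by
  rw [← dual_prod_apply_zero_mk, dualFst, LinearMap.comp_apply, LinearMap.inl_apply, ← map_add,
    Prod.mk_add_mk, add_zero, zero_add]

theorem dualSnd_eval_comp_snd [FiniteDimensional F V] (v : V) :
    dualSnd (Module.Dual.eval F V v ∘ₗ LinearMap.snd F A (Module.Dual F V)) = v := by
  rw [dualSnd, LinearMap.comp_assoc, LinearMap.snd_comp_inr, LinearMap.comp_id,
    ← Module.evalEquiv_apply, LinearEquiv.symm_apply_apply]

variable (mul : A →ₗ[F] A →ₗ[F] A) (l r : A →ₗ[F] Module.End F V) (T : V →ₗ[F] A)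

def oDefect (v w : V) : A :=
  mul (T v) (T w) - T (l (T v) w + r (T w) v)

theorem isOOp_iff_oDefect_eq_zero :
    IsOOp mul l r T ↔ ∀ v w, oDefect mul l r T v w = 0 := by
  simp only [IsOOp, oDefect, sub_eq_zero]

noncomputable def symmetrizedTensor {n : ℕ} (b : Module.Basis (Fin n) F V) :
    (A × Module.Dual F V) ⊗[F] (A × Module.Dual F V) :=
  ∑ i : Fin n,
      (((T (b i), 0) : A × Module.Dual F V) ⊗ₜ[F] ((0, b.dualBasis i) : A × Module.Dual F V))
    + ∑ i : Fin n,
      (((0, b.dualBasis i) : A × Module.Dual F V) ⊗ₜ[F] ((T (b i), 0) : A × Module.Dual F V))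

variable {n : ℕ} (b : Module.Basis (Fin n) F V)

theorem comm_symmetrizedTensor :
    TensorProduct.comm F _ _ (symmetrizedTensor T b) = symmetrizedTensor T b := by
  simp only [symmetrizedTensor, map_add, map_sum, TensorProduct.comm_tmul, add_comm]

theorem contrLeft_symmetrizedTensor [FiniteDimensional F V]
    (f : Module.Dual F (A × Module.Dual F V)) :
    contrLeft f (symmetrizedTensor T b) = (T (dualSnd f), dualFst f ∘ₗ T) := by
  have hA : ∑ i, f (0, b.dualBasis i) • T (b i) = T (dualSnd f) := by
    simp only [dual_prod_apply_zero_mk, ← map_smul, ← map_sum, Module.Basis.dualBasis_apply,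
      b.sum_repr]
  have hV : ∑ i, f (T (b i), 0) • b.dualBasis i = dualFst f ∘ₗ T := by
    rw [Module.Basis.coe_dualBasis]
    exact b.sum_dual_apply_smul_coord (dualFst f ∘ₗ T)
  simp only [symmetrizedTensor, map_add, map_sum, contrLeft_tmul, Prod.smul_mk, smul_zero]
  ext1
  · simpa [Prod.fst_sum] using hA
  · simpa [Prod.snd_sum] using hV

theorem contrRight_symmetrizedTensor [FiniteDimensional F V]
    (f : Module.Dual F (A × Module.Dual F V)) :
    contrRight f (symmetrizedTensor T b) = (T (dualSnd f), dualFst f ∘ₗ T) := by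
  rw [contrRight_eq_contrLeft_comm, comm_symmetrizedTensor, contrLeft_symmetrizedTensor]

theorem tripleEval_cybeLHS_symmetrizedTensor [FiniteDimensional F V]
    (f g h : Module.Dual F (A × Module.Dual F V)) :
    tripleEval f g h
        (cybeLHS (sdMul mul (dualRepSub l r) (dualRepNeg r)) (symmetrizedTensor T b))
      = -dualFst f (oDefect mul l r T (dualSnd g) (dualSnd h))
        + dualFst g (oDefect mul l r T (dualSnd f) (dualSnd h))
        + dualFst h (oDefect mul l r T (dualSnd f) (dualSnd g)
            - oDefect mul l r T (dualSnd g) (dualSnd f)) := by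
  rw [tripleEval_cybeLHS]
  simp only [contrLeft_symmetrizedTensor, contrRight_symmetrizedTensor]
  simp only [sdMul, dualRepSub, dualRepNeg, LinearMap.mk₂_apply, sdFn, LinearMap.coe_mk,
    AddHom.coe_mk, LinearMap.sub_apply, LinearMap.neg_apply, sub_neg_eq_add, neg_neg,
    dual_prod_apply_mk, LinearMap.add_apply, LinearMap.dualMap_apply, LinearMap.coe_comp,
    Function.comp_apply, neg_add_rev, Prod.mk_sub_mk, map_sub, oDefect, map_add, neg_sub]
  ring

end Semidirect

theorem stmt1_general {F A V : Type*} [Field F]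
    [AddCommGroup A] [Module F A] [FiniteDimensional F A]
    [AddCommGroup V] [Module F V] [FiniteDimensional F V]
    (mul : A →ₗ[F] A →ₗ[F] A)
    (l r : A →ₗ[F] Module.End F V)
    (T : V →ₗ[F] A) {n : ℕ} (b : Module.Basis (Fin n) F V) :
    IsOOp mul l r T ↔
      IsCYBE (sdMul mul (dualRepSub l r) (dualRepNeg r))
        (∑ i : Fin n,
            (((T (b i), 0) : A × Module.Dual F V) ⊗ₜ[F]
              ((0, b.dualBasis i) : A × Module.Dual F V))
         + ∑ i : Fin n,
            (((0, b.dualBasis i) : A × Module.Dual F V) ⊗ₜ[F]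
              ((T (b i), 0) : A × Module.Dual F V))) := by
  change _ ↔ cybeLHS _ (symmetrizedTensor T b) = 0
  rw [isOOp_iff_oDefect_eq_zero]
  constructor
  · intro hT
    refine eq_zero_of_forall_tripleEval_eq_zero fun f g h => ?_
    simp [tripleEval_cybeLHS_symmetrizedTensor, hT]
  · intro hC v w
    refine (Module.forall_dual_apply_eq_zero_iff F _).mp fun α => ?_
    have hpair := congrArg (tripleEval (α ∘ₗ LinearMap.fst F A (Module.Dual F V))
      (Module.Dual.eval F V v ∘ₗ LinearMap.snd F A _)
      (Module.Dual.eval F V w ∘ₗ LinearMap.snd F A _)) hC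
    rw [tripleEval_cybeLHS_symmetrizedTensor, map_zero] at hpair
    simpa [dualFst, dualSnd_eval_comp_snd] using hpair

/-- `T : V → A` is an O-operator associated to a bimodule `(V; l, r)` iff
`s_T = Σ T(v_i) ⊗ ξ_i + Σ ξ_i ⊗ T(v_i)` is a solution of the analogue of the CYBE on
the semidirect product `A ⋉_{l*-r*, -r*} V*`. -/
theorem stmt1 {F A V : Type*} [Field F] [CharZero F]
    [AddCommGroup A] [Module F A] [FiniteDimensional F A]
    [AddCommGroup V] [Module F V] [FiniteDimensional F V]
    (mul : A →ₗ[F] A →ₗ[F] A) (hA : PreMalcevFn fun x y => mul x y)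
    (l r : A →ₗ[F] Module.End F V) (hbim : IsBimodule mul l r)
    (T : V →ₗ[F] A) {n : ℕ} (b : Module.Basis (Fin n) F V) :
    IsOOp mul l r T ↔
      IsCYBE (sdMul mul (dualRepSub l r) (dualRepNeg r))
        (∑ i : Fin n,
            (((T (b i), 0) : A × Module.Dual F V) ⊗ₜ[F]
              ((0, b.dualBasis i) : A × Module.Dual F V))
         + ∑ i : Fin n,
            (((0, b.dualBasis i) : A × Module.Dual F V) ⊗ₜ[F]
              ((T (b i), 0) : A × Module.Dual F V))) :=
  stmt1_general mul l r T b
end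

section
/- Let A be a finite-dimensional pre-Malcev algebra over a field F of characteristic zero and T : A* → A an invertible linear map. Define a bilinear form B : A × A → F by B(x, y) = ⟨T^{-1}(x), y⟩. Then T is an O-operator of A associated to the bimodule (A*; L* − R*, 0), i.e. T(ξ)·T(η) = T((L*_{T(ξ)} − R*_{T(ξ)})(η)) for all ξ, η ∈ A*, if and only if B(x·y, z) = −B(y, x·z − z·x) for all x, y, z ∈ A. -/
open TensorProduct

section OOperator

variable {F A V : Type*} [Field F] [AddCommGroup A] [Module F A] [AddCommGroup V] [Module F V]

theorem dualRepSub_apply_apply (l r : A →ₗ[F] Module.End F V) (x : A)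
    (η : Module.Dual F V) (v : V) :
    dualRepSub l r x η v = η (r x v) - η (l x v) := by
  simp only [dualRepSub, LinearMap.coe_mk, AddHom.coe_mk, LinearMap.sub_apply,
    LinearMap.neg_apply, LinearMap.dualMap_apply]
  abel

theorem isOOp_zero_iff_symm_mul (mul : A →ₗ[F] A →ₗ[F] A) (l : A →ₗ[F] Module.End F V)
    (T : V ≃ₗ[F] A) :
    IsOOp mul l 0 T.toLinearMap ↔ ∀ x y : A, T.symm (mul x y) = l x (T.symm y) := by
  simp only [IsOOp, LinearMap.zero_apply, add_zero, LinearEquiv.coe_coe,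
    ← T.symm_apply_eq]
  exact ⟨fun h x y => by simpa using h (T.symm x) (T.symm y),
    fun h v w => by simpa using h (T v) (T w)⟩

end OOperator

theorem stmt3_general {F A : Type*} [Field F] [AddCommGroup A] [Module F A]
    (mul : A →ₗ[F] A →ₗ[F] A)
    (T : Module.Dual F A ≃ₗ[F] A)
    (B : A → A → F) (hB : ∀ x y : A, B x y = T.symm x y) :
    IsOOp mul (dualRepSub mul mul.flip) 0 T.toLinearMap ↔
      ∀ x y z : A, B (mul x y) z = -B y (mul x z - mul z x) := by
  rw [isOOp_zero_iff_symm_mul]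
  refine forall₂_congr fun x y => ?_
  simp only [hB, LinearMap.ext_iff, dualRepSub_apply_apply, LinearMap.flip_apply, map_sub,
    neg_sub]

/-- for an invertible `T : A* → A` with associated bilinear form
`B(x, y) = ⟨T⁻¹ x, y⟩`, `T` is an O-operator associated to `(A*; L* - R*, 0)` iff
`B(x·y, z) = -B(y, x·z - z·x)`. -/
theorem stmt3 {F A : Type*} [Field F] [CharZero F] [AddCommGroup A] [Module F A]
    [FiniteDimensional F A]
    (mul : A →ₗ[F] A →ₗ[F] A) (hA : PreMalcevFn fun x y => mul x y)
    (T : Module.Dual F A ≃ₗ[F] A)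
    (B : A → A → F) (hB : ∀ x y : A, B x y = T.symm x y) :
    IsOOp mul (dualRepSub mul mul.flip) 0 T.toLinearMap ↔
      ∀ x y z : A, B (mul x y) z = -B y (mul x z - mul z x) :=
  stmt3_general mul T B hB
end

section
/- Let T : V → A be an O-operator of a pre-Malcev algebra A associated to a bimodule (V; ℓ, 𝔯). Define a product on V by u ⋄^T v = ℓ_{T(u)}(v) + 𝔯_{T(v)}(u) for all u, v ∈ V. Then (V, ⋄^T) is a pre-Malcev algebra, i.e. ⋄^T satisfies the pre-Malcev identity. -/
/-!
The O-operator identity says exactly that the graph map `v ↦ (T v, v)` is multiplicative from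
`(V, ⋄^T)` to the semidirect product `A ⋉ V`, which is pre-Malcev by definition of a bimodule.
The graph map is additive and injective, and an identity of this shape is reflected by injective
additive multiplicative maps.
-/

open TensorProduct

theorem PreMalcevFn.of_injective {B A : Type*} [AddCommGroup B] [AddCommGroup A]
    {mulB : B → B → B} {mulA : A → A → A} (f : B →+ A) (hf : Function.Injective f)
    (hmul : ∀ u v, f (mulB u v) = mulA (f u) (f v)) (hA : PreMalcevFn mulA) :
    PreMalcevFn mulB := by
  intro x y z t
  apply hf
  simpa only [map_add, map_sub, hmul, map_zero] using hA (f x) (f y) (f z) (f t)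

section OOperator

variable {F A V : Type*} [Field F] [AddCommGroup A] [Module F A] [AddCommGroup V] [Module F V]
  {mul : A →ₗ[F] A →ₗ[F] A} {l r : A →ₗ[F] Module.End F V} {T : V →ₗ[F] A}

theorem LinearMap.prod_id_injective (T : V →ₗ[F] A) :
    Function.Injective (T.prod LinearMap.id) :=
  fun _ _ h => congrArg Prod.snd h

theorem IsOOp.sdFn_graph (hT : IsOOp mul l r T) (u v : V) :
    sdFn mul l r (T u, u) (T v, v) = (T (dia l r T u v), dia l r T u v) :=
  Prod.ext (hT u v) rfl

end OOperator

theorem stmt5_general {F A V : Type*} [Field F]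
    [AddCommGroup A] [Module F A] [AddCommGroup V] [Module F V]
    (mul : A →ₗ[F] A →ₗ[F] A)
    (l r : A →ₗ[F] Module.End F V) (hbim : IsBimodule mul l r)
    (T : V →ₗ[F] A) (hT : IsOOp mul l r T) :
    PreMalcevFn (fun u v : V => l (T u) v + r (T v) u) :=
  PreMalcevFn.of_injective (mulA := sdFn mul l r) (T.prod LinearMap.id).toAddMonoidHom
    T.prod_id_injective (fun u v => (hT.sdFn_graph u v).symm) hbim

/-- if `T` is an O-operator of a pre-Malcev algebra `A` associated to a
bimodule `(V; l, r)`, then `u ⋄^T v = l_{T u}(v) + r_{T v}(u)` makes `V` a pre-Malcev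
algebra. -/
theorem stmt5 {F A V : Type*} [Field F] [CharZero F]
    [AddCommGroup A] [Module F A] [AddCommGroup V] [Module F V]
    (mul : A →ₗ[F] A →ₗ[F] A) (hA : PreMalcevFn fun x y => mul x y)
    (l r : A →ₗ[F] Module.End F V) (hbim : IsBimodule mul l r)
    (T : V →ₗ[F] A) (hT : IsOOp mul l r T) :
    PreMalcevFn (fun u v : V => l (T u) v + r (T v) u) :=
  stmt5_general mul l r hbim T hT
end

section
/- Let (N, S) be a Nijenhuis pair on a pre-Malcev algebra (A, ·) with bimodule (V; ℓ, 𝔯). Define ω(x,y) = N(x)·y + x·N(y) − N(x·y), ϖ^ℓ(x) = ℓ_{N(x)} + ℓ_x ∘ S − S ∘ ℓ_x, and ϖ^𝔯(x) = 𝔯_{N(x)} + 𝔯_x ∘ S − S ∘ 𝔯_x. Then for every t ∈ F: (i) the product x ·_t y = x·y + tω(x,y) makes A a pre-Malcev algebra; (ii) ℓ^t_x = ℓ_x + tϖ^ℓ(x) and 𝔯^t_x = 𝔯_x + tϖ^𝔯(x) make (V; ℓ^t, 𝔯^t) a bimodule of (A, ·_t); (iii) the deformation is trivial, i.e. (Id_A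 + tN)(x ·_t y) = (Id_A + tN)(x)·(Id_A + tN)(y), (Id_V + tS) ∘ ℓ^t_x = ℓ_{(Id_A + tN)(x)} ∘ (Id_V + tS), and (Id_V + tS) ∘ 𝔯^t_x = 𝔯_{(Id_A + tN)(x)} ∘ (Id_V + tS) for all x, y ∈ A. -/
open TensorProduct

/-!
Write `m_t = m + t • ω` for the deformed product. The Nijenhuis identities say exactly that
`id + t • N` (together with `id + t • S` on `V`) carries the deformed structures to the original
ones, which is part (iii). Since `id + t • N` need not be invertible, (i) does not follow
directly: instead, the pre-Malcev expression of `m_s` is a cubic polynomial in `s` without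
constant term, and `id + s • N` maps it to the pre-Malcev expression of `m`, which is zero.
This gives a polynomial identity of degree four in `s` valid for all `s`, and comparing
coefficients (characteristic zero) makes the cubic vanish. Part (ii) is (i) for the semidirect
product `A ⋉ V` with the Nijenhuis operator `N × S`, whose deformation is the semidirect product
of the deformed data.
-/

section MalcevTerm

variable {R B : Type*} [CommRing R] [AddCommGroup B] [Module R B]

/-- The pre-Malcev expression with its innermost, middle and outermost products taken
from `u`, `v` and `w` respectively. -/
def malcevTerm (u v w : B →ₗ[R] B →ₗ[R] B) (x y z t : B) : B :=
  w (u y z) (v x t) - w (u z y) (v x t)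
    + w (v (u x y) z) t - w (v (u y x) z) t
    - w (v z (u x y)) t + w (v z (u y x)) t
    + w y (v (u x z) t) - w y (v (u z x) t)
    - w x (v y (u z t)) + w z (v x (u y t))

theorem preMalcevFn_iff_malcevTerm (m : B →ₗ[R] B →ₗ[R] B) :
    PreMalcevFn (fun a b => m a b) ↔ ∀ x y z t, malcevTerm m m m x y z t = 0 :=
  Iff.rfl

theorem LinearMap.map_malcevTerm {C : Type*} [AddCommGroup C] [Module R C] (f : B →ₗ[R] C)
    {m : B →ₗ[R] B →ₗ[R] B} {m' : C →ₗ[R] C →ₗ[R] C}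
    (h : ∀ a b, f (m a b) = m' (f a) (f b)) (x y z t : B) :
    f (malcevTerm m m m x y z t) = malcevTerm m' m' m' (f x) (f y) (f z) (f t) := by
  simp only [malcevTerm, map_add, map_sub, h]

theorem malcevTerm_add_smul (P Q : B →ₗ[R] B →ₗ[R] B) (s : R) (x y z t : B) :
    malcevTerm (P + s • Q) (P + s • Q) (P + s • Q) x y z t
      = malcevTerm P P P x y z t
        + s • (malcevTerm Q P P x y z t + malcevTerm P Q P x y z t + malcevTerm P P Q x y z t)
        + s ^ 2 • (malcevTerm P Q Q x y z t + malcevTerm Q P Q x y z t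
          + malcevTerm Q Q P x y z t)
        + s ^ 3 • malcevTerm Q Q Q x y z t := by
  simp only [malcevTerm, map_add, map_smul, LinearMap.add_apply, LinearMap.smul_apply]
  module

end MalcevTerm

theorem eq_zero_of_forall_smul_pow_add {F M : Type*} [Field F] [CharZero F] [AddCommGroup M]
    [Module F M] {a b c d : M} (h : ∀ s : F, s • a + s ^ 2 • b + s ^ 3 • c + s ^ 4 • d = 0) :
    a = 0 ∧ b = 0 ∧ c = 0 ∧ d = 0 := by
  have h₁ := h 1
  have h₂ := h 2
  have h₃ := h 3
  have h₄ := h 4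
  -- The coefficients are the rows of the inverse of the Vandermonde matrix `(s ^ k)_{s,k ≤ 4}`.
  refine ⟨?_, ?_, ?_, ?_⟩
  · linear_combination (norm := module)
      (4 : F) • h₁ - (3 : F) • h₂ + (4 / 3 : F) • h₃ - (1 / 4 : F) • h₄
  · linear_combination (norm := module)
      (-13 / 3 : F) • h₁ + (19 / 4 : F) • h₂ - (7 / 3 : F) • h₃ + (11 / 24 : F) • h₄
  · linear_combination (norm := module)
      (3 / 2 : F) • h₁ - (2 : F) • h₂ + (7 / 6 : F) • h₃ - (1 / 4 : F) • h₄
  · linear_combination (norm := module)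
      (-1 / 6 : F) • h₁ + (1 / 4 : F) • h₂ - (1 / 6 : F) • h₃ + (1 / 24 : F) • h₄

section NijenhuisDeformation

variable {F A W : Type*} [Field F] [AddCommGroup A] [Module F A] [AddCommGroup W] [Module F W]

/-- For `f = mul` and `S = N` this is the paper's `ω`; for `f = ℓ` (resp. `𝔯`) it is `ϖ^ℓ`
(resp. `ϖ^𝔯`). -/
def nijDeformation (f : A →ₗ[F] W →ₗ[F] W) (N : A →ₗ[F] A) (S : W →ₗ[F] W) :
    A →ₗ[F] W →ₗ[F] W :=
  f ∘ₗ N + f.compl₂ S - f.compr₂ S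

@[simp]
theorem nijDeformation_apply (f : A →ₗ[F] W →ₗ[F] W) (N : A →ₗ[F] A) (S : W →ₗ[F] W)
    (x : A) (w : W) : nijDeformation f N S x w = f (N x) w + f x (S w) - S (f x w) :=
  rfl

def IsNijCompatible (f : A →ₗ[F] W →ₗ[F] W) (N : A →ₗ[F] A) (S : W →ₗ[F] W) : Prop :=
  ∀ x w, f (N x) (S w) = S (nijDeformation f N S x w)

theorem IsNijCompatible.add_smul_apply {f : A →ₗ[F] W →ₗ[F] W} {N : A →ₗ[F] A}
    {S : W →ₗ[F] W} (h : IsNijCompatible f N S) (t : F) (x : A) (w : W) :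
    (f + t • nijDeformation f N S) x w + t • S ((f + t • nijDeformation f N S) x w)
      = f (x + t • N x) (w + t • S w) := by
  have hxw := h x w
  simp only [nijDeformation_apply, map_add, map_sub] at hxw
  simp only [LinearMap.add_apply, LinearMap.smul_apply, nijDeformation_apply, map_add,
    map_sub, map_smul]
  linear_combination (norm := module) (-(t * t)) • hxw

end NijenhuisDeformation

theorem IsNijCompatible.preMalcevFn_add_smul {F A : Type*} [Field F] [CharZero F]
    [AddCommGroup A] [Module F A] {m : A →ₗ[F] A →ₗ[F] A} {N : A →ₗ[F] A}
    (hA : PreMalcevFn fun a b => m a b) (hN : IsNijCompatible m N N) (t : F) :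
    PreMalcevFn fun a b => (m + t • nijDeformation m N N) a b := by
  rw [preMalcevFn_iff_malcevTerm] at hA ⊢
  intro x y z w
  set ω := nijDeformation m N N
  set R₁ := malcevTerm ω m m x y z w + malcevTerm m ω m x y z w + malcevTerm m m ω x y z w
  set R₂ := malcevTerm m ω ω x y z w + malcevTerm ω m ω x y z w + malcevTerm ω ω m x y z w
  set R₃ := malcevTerm ω ω ω x y z w
  have hexpand (s : F) :
      malcevTerm (m + s • ω) (m + s • ω) (m + s • ω) x y z w
        = s • R₁ + s ^ 2 • R₂ + s ^ 3 • R₃ := by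
    rw [malcevTerm_add_smul, hA, zero_add]
  have hkill (s : F) :
      s • R₁ + s ^ 2 • (R₂ + N R₁) + s ^ 3 • (R₃ + N R₂) + s ^ 4 • N R₃ = 0 := by
    have hmap := (LinearMap.id + s • N).map_malcevTerm (m := m + s • ω) (m' := m)
      (fun a b => by
        simpa only [LinearMap.add_apply, LinearMap.id_apply, LinearMap.smul_apply] using
          hN.add_smul_apply s a b) x y z w
    rw [hexpand, hA] at hmap
    simp only [LinearMap.add_apply, LinearMap.id_apply, LinearMap.smul_apply, map_add,
      map_smul] at hmap
    linear_combination (norm := module) hmap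
  obtain ⟨h₁, h₂, h₃, -⟩ := eq_zero_of_forall_smul_pow_add hkill
  rw [h₁, map_zero, add_zero] at h₂
  rw [h₂, map_zero, add_zero] at h₃
  simp [hexpand, h₁, h₂, h₃]

section SemidirectProduct

variable {F A V : Type*} [Field F] [AddCommGroup A] [Module F A] [AddCommGroup V] [Module F V]
  {mul : A →ₗ[F] A →ₗ[F] A} {l r : A →ₗ[F] Module.End F V} {N : A →ₗ[F] A} {S : V →ₗ[F] V}

@[simp]
theorem sdMul_apply (p q : A × V) : sdMul mul l r p q = (mul p.1 q.1, l p.1 q.2 + r q.1 p.2) :=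
  rfl

theorem IsBimodule.preMalcevFn_sdMul (h : IsBimodule mul l r) :
    PreMalcevFn fun p q => sdMul mul l r p q :=
  h

theorem IsNijPair.isNijCompatible_sdMul (h : IsNijPair mul l r N S) :
    IsNijCompatible (sdMul mul l r) (N.prodMap S) (N.prodMap S) := by
  obtain ⟨hN, hl, hr⟩ := h
  intro p q
  ext
  · exact hN p.1 q.1
  · simp only [sdMul_apply, nijDeformation_apply, LinearMap.prodMap_apply,
      Prod.snd_add, Prod.snd_sub, map_add, map_sub]
    simp only [map_add, map_sub] at hl hr
    linear_combination (norm := module) hl p.1 q.2 + hr q.1 p.2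

theorem sdMul_add_smul_nijDeformation (t : F) :
    sdMul mul l r + t • nijDeformation (sdMul mul l r) (N.prodMap S) (N.prodMap S)
      = sdMul (mul + t • nijDeformation mul N N) (l + t • nijDeformation l N S)
          (r + t • nijDeformation r N S) := by
  refine LinearMap.ext₂ fun p q => Prod.ext ?_ ?_
  · simp
  · simp only [LinearMap.add_apply, LinearMap.smul_apply, sdMul_apply, nijDeformation_apply,
      LinearMap.prodMap_apply, Prod.snd_add, Prod.snd_sub, Prod.smul_snd, map_add]
    module

end SemidirectProduct

/-- a Nijenhuis pair `(N, S)` on a pre-Malcev algebra `A` with bimodule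
`(V; l, r)` generates, for every `t`, an infinitesimal deformation
`(A, ·_t, l^t, r^t)`, and this deformation is trivial. -/
theorem stmt7 {F A V : Type*} [Field F] [CharZero F]
    [AddCommGroup A] [Module F A] [AddCommGroup V] [Module F V]
    (mul : A →ₗ[F] A →ₗ[F] A) (hA : PreMalcevFn fun x y => mul x y)
    (l r : A →ₗ[F] Module.End F V) (hbim : IsBimodule mul l r)
    (N : A →ₗ[F] A) (S : V →ₗ[F] V) (hNS : IsNijPair mul l r N S) (t : F)
    (ω : A → A → A) (hω : ∀ x y : A, ω x y = mul (N x) y + mul x (N y) - N (mul x y))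
    (lt : A → V → V)
    (hlt : ∀ (x : A) (v : V), lt x v = l x v + t • (l (N x) v + l x (S v) - S (l x v)))
    (rt : A → V → V)
    (hrt : ∀ (x : A) (v : V), rt x v = r x v + t • (r (N x) v + r x (S v) - S (r x v)))
    (mt : A → A → A) (hmt : ∀ x y : A, mt x y = mul x y + t • ω x y) :
    PreMalcevFn mt
    ∧ PreMalcevFn (fun p q : A × V => (mt p.1 q.1, lt p.1 q.2 + rt q.1 p.2))
    ∧ (∀ x y : A, mt x y + t • N (mt x y) = mul (x + t • N x) (y + t • N y))
    ∧ (∀ (x : A) (v : V), lt x v + t • S (lt x v) = l (x + t • N x) (v + t • S v))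
    ∧ (∀ (x : A) (v : V), rt x v + t • S (rt x v) = r (x + t • N x) (v + t • S v)) := by
  obtain rfl : mt = fun x y => (mul + t • nijDeformation mul N N) x y := by
    funext x y; simp [hmt, hω]
  obtain rfl : lt = fun x v => (l + t • nijDeformation l N S) x v := by
    funext x v; simp [hlt]
  obtain rfl : rt = fun x v => (r + t • nijDeformation r N S) x v := by
    funext x v; simp [hrt]
  have hsd := hNS.isNijCompatible_sdMul.preMalcevFn_add_smul hbim.preMalcevFn_sdMul t
  rw [sdMul_add_smul_nijDeformation] at hsd
  obtain ⟨hN, hl, hr⟩ :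
      IsNijCompatible mul N N ∧ IsNijCompatible l N S ∧ IsNijCompatible r N S := hNS
  exact ⟨hN.preMalcevFn_add_smul hA t, hsd, hN.add_smul_apply t, hl.add_smul_apply t,
    hr.add_smul_apply t⟩
end

section
/- Let R be a Rota–Baxter operator (of weight zero) and N a Nijenhuis operator on a Malcev algebra (M, [−,−]), and suppose R ∘ N = N ∘ R. Then R is a Rota–Baxter operator on M equipped with the deformed bracket [x,y]_N = [N(x),y] + [x,N(y)] − N([x,y]); that is, [R(x), R(y)]_N = R([R(x), y]_N + [x, R(y)]_N) for all x, y ∈ M. -/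
open TensorProduct

def deformedBr {K M : Type*} [CommRing K] [AddCommGroup M] [Module K M]
    (br : M →ₗ[K] M →ₗ[K] M) (N : M →ₗ[K] M) (x y : M) : M :=
  br (N x) y + br x (N y) - N (br x y)

/-- Moving `N` across `R` turns each of the three terms of `[R x, R y]_N` into an `R`-image,
by the Rota–Baxter identity for `(R (N x), R y)`, `(R x, R (N y))` and `(R x, R y)`. -/
theorem isRotaBaxter_deformedBr {K M : Type*} [CommRing K] [AddCommGroup M] [Module K M]
    (br : M →ₗ[K] M →ₗ[K] M) (R N : M →ₗ[K] M)
    (hR : ∀ x y : M, br (R x) (R y) = R (br (R x) y + br x (R y)))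
    (hcomm : ∀ x : M, R (N x) = N (R x)) (x y : M) :
    deformedBr br N (R x) (R y) = R (deformedBr br N (R x) y + deformedBr br N x (R y)) := by
  unfold deformedBr
  rw [← hcomm x, ← hcomm y, hR (N x) y, hR x (N y), hR x y, ← hcomm]
  simp only [map_add, map_sub]
  abel

theorem stmt8_general {F M : Type*} [Field F] [AddCommGroup M] [Module F M]
    (br : M →ₗ[F] M →ₗ[F] M)
    (R N : M →ₗ[F] M)
    (hR : ∀ x y : M, br (R x) (R y) = R (br (R x) y + br x (R y)))
    (hcomm : R ∘ₗ N = N ∘ₗ R) :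
    ∀ x y : M,
      br (N (R x)) (R y) + br (R x) (N (R y)) - N (br (R x) (R y)) =
        R ((br (N (R x)) y + br (R x) (N y) - N (br (R x) y))
          + (br (N x) (R y) + br x (N (R y)) - N (br x (R y)))) :=
  isRotaBaxter_deformedBr br R N hR (LinearMap.congr_fun hcomm)

/-- if `R` is a Rota-Baxter operator and `N` a Nijenhuis operator on a Malcev
algebra with `R ∘ N = N ∘ R`, then `R` is a Rota-Baxter operator for the deformed bracket
`[x,y]_N = [N x, y] + [x, N y] - N [x, y]`. -/
theorem stmt8 {F M : Type*} [Field F] [CharZero F] [AddCommGroup M] [Module F M]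
    (br : M →ₗ[F] M →ₗ[F] M)
    (hanti : ∀ x y : M, br x y = -br y x)
    (hMal : ∀ x y z : M, br (br x y) (br x z) =
      br (br (br x y) z) x + br (br (br y z) x) x + br (br (br z x) x) y)
    (R N : M →ₗ[F] M)
    (hR : ∀ x y : M, br (R x) (R y) = R (br (R x) y + br x (R y)))
    (hN : ∀ x y : M, br (N x) (N y) = N (br (N x) y + br x (N y) - N (br x y)))
    (hcomm : R ∘ₗ N = N ∘ₗ R) :
    ∀ x y : M,
      br (N (R x)) (R y) + br (R x) (N (R y)) - N (br (R x) (R y)) =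
        R ((br (N (R x)) y + br (R x) (N y) - N (br (R x) y))
          + (br (N x) (R y) + br x (N (R y)) - N (br x (R y)))) :=
  stmt8_general br R N hR hcomm
end

section
/- Let R be a Rota–Baxter operator (of weight zero) and N a Nijenhuis operator on a Malcev algebra (M, [−,−]), and suppose R ∘ N = N ∘ R. Then N is a Nijenhuis operator on the pre-Malcev algebra (M, ·^R) with product x ·^R y = [R(x), y]; that is, N(x) ·^R N(y) = N(N(x) ·^R y + x ·^R N(y) − N(x ·^R y)) for all x, y ∈ M. -/
open TensorProduct

theorem IsNijenhuisFn.precomp_of_commute {F A : Type*} [Field F] [AddCommGroup A] [Module F A]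
    {mul : A → A → A} {N : A →ₗ[F] A} (hN : IsNijenhuisFn mul N) {R : A → A}
    (hRN : Function.Commute R N) :
    IsNijenhuisFn (fun x y => mul (R x) y) N := by
  intro x y
  simpa only [hRN x] using hN (R x) y

theorem stmt9_general {F M : Type*} [Field F] [AddCommGroup M] [Module F M]
    (br : M →ₗ[F] M →ₗ[F] M)
    (R N : M →ₗ[F] M)
    (hN : ∀ x y : M, br (N x) (N y) = N (br (N x) y + br x (N y) - N (br x y)))
    (hcomm : R ∘ₗ N = N ∘ₗ R) :
    IsNijenhuisFn (fun x y : M => br (R x) y) N :=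
  IsNijenhuisFn.precomp_of_commute (mul := fun x y => br x y) hN (LinearMap.congr_fun hcomm)

/-- if `R` is a Rota-Baxter operator and `N` a Nijenhuis operator on a Malcev
algebra with `R ∘ N = N ∘ R`, then `N` is a Nijenhuis operator on the pre-Malcev algebra
`(M, ·^R)` with `x ·^R y = [R x, y]`. -/
theorem stmt9 {F M : Type*} [Field F] [CharZero F] [AddCommGroup M] [Module F M]
    (br : M →ₗ[F] M →ₗ[F] M)
    (hanti : ∀ x y : M, br x y = -br y x)
    (hMal : ∀ x y z : M, br (br x y) (br x z) =
      br (br (br x y) z) x + br (br (br y z) x) x + br (br (br z x) x) y)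
    (R N : M →ₗ[F] M)
    (hR : ∀ x y : M, br (R x) (R y) = R (br (R x) y + br x (R y)))
    (hN : ∀ x y : M, br (N x) (N y) = N (br (N x) y + br x (N y) - N (br x y)))
    (hcomm : R ∘ₗ N = N ∘ₗ R) :
    IsNijenhuisFn (fun x y : M => br (R x) y) N :=
  stmt9_general br R N hN hcomm
end

section
/- Let (N, S) be a Nijenhuis pair on a pre-Malcev algebra A with bimodule (V; ℓ, 𝔯). Then the linear map N + S : A ⊕ V → A ⊕ V, (x, u) ↦ (N(x), S(u)), is a Nijenhuis operator on the semi-direct product pre-Malcev algebra A ⋉_{ℓ,𝔯} V. -/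
open TensorProduct

theorem IsNijPair.isNijenhuisFn_sdFn {F A V : Type*} [Field F]
    [AddCommGroup A] [Module F A] [AddCommGroup V] [Module F V]
    {mul : A →ₗ[F] A →ₗ[F] A} {l r : A →ₗ[F] Module.End F V} {N : A →ₗ[F] A}
    {S : V →ₗ[F] V} (h : IsNijPair mul l r N S) :
    IsNijenhuisFn (sdFn mul l r) (N.prodMap S) := by
  obtain ⟨hN, hl, hr⟩ := h
  rintro ⟨x, u⟩ ⟨y, v⟩
  refine Prod.ext (hN x y) ?_
  simp only [sdFn, LinearMap.prodMap_apply, Prod.snd_add, Prod.snd_sub]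
  rw [hl x v, hr y u]
  simp only [map_add, map_sub]
  abel

theorem stmt10_general {F A V : Type*} [Field F]
    [AddCommGroup A] [Module F A] [AddCommGroup V] [Module F V]
    (mul : A →ₗ[F] A →ₗ[F] A)
    (l r : A →ₗ[F] Module.End F V)
    (N : A →ₗ[F] A) (S : V →ₗ[F] V) (hNS : IsNijPair mul l r N S) :
    IsNijenhuisFn (sdFn mul l r) (N.prodMap S) :=
  hNS.isNijenhuisFn_sdFn

/-- a Nijenhuis pair `(N, S)` on a pre-Malcev algebra `A` with bimodule
`(V; l, r)` gives a Nijenhuis operator `N + S` on the semidirect product `A ⋉_{l,r} V`. -/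
theorem stmt10 {F A V : Type*} [Field F] [CharZero F]
    [AddCommGroup A] [Module F A] [AddCommGroup V] [Module F V]
    (mul : A →ₗ[F] A →ₗ[F] A) (hA : PreMalcevFn fun x y => mul x y)
    (l r : A →ₗ[F] Module.End F V) (hbim : IsBimodule mul l r)
    (N : A →ₗ[F] A) (S : V →ₗ[F] V) (hNS : IsNijPair mul l r N S) :
    IsNijenhuisFn (sdFn mul l r) (N.prodMap S) :=
  stmt10_general mul l r N S hNS
end

section
/- Let A be a finite-dimensional pre-Malcev algebra with bimodule (V; ℓ, 𝔯), V finite-dimensional, N ∈ gl(A) and S ∈ gl(V). Then (N, S) is a Nijenhuis pair on A with bimodule (V; ℓ, 𝔯) if and only if (N, S*) is a dual-Nijenhuis pair on A with the dual bimodule (V*; ℓ* − 𝔯*, −𝔯*), where S* : V* → V* is the transpose of S. -/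
open TensorProduct

def IsNijenhuisCompatible {R A V : Type*} [CommRing R] [AddCommGroup A] [Module R A]
    [AddCommGroup V] [Module R V] (ρ : A →ₗ[R] Module.End R V) (N : A →ₗ[R] A)
    (S : V →ₗ[R] V) : Prop :=
  ∀ x v, ρ (N x) (S v) = S (ρ (N x) v + ρ x (S v) - S (ρ x v))

def IsDualNijenhuisCompatible {R A V : Type*} [CommRing R] [AddCommGroup A] [Module R A]
    [AddCommGroup V] [Module R V] (ρ : A →ₗ[R] Module.End R V) (N : A →ₗ[R] A)
    (S : V →ₗ[R] V) : Prop :=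
  ∀ x v, ρ (N x) (S v) = S (ρ (N x) v) + ρ x (S (S v)) - S (ρ x (S v))

section Compatible

variable {R A V : Type*} [CommRing R] [AddCommGroup A] [Module R A]
  [AddCommGroup V] [Module R V] {N : A →ₗ[R] A} {S : V →ₗ[R] V}

theorem IsNijenhuisCompatible.sub {ρ σ : A →ₗ[R] Module.End R V}
    (hρ : IsNijenhuisCompatible ρ N S) (hσ : IsNijenhuisCompatible σ N S) :
    IsNijenhuisCompatible (ρ - σ) N S := by
  intro x v
  simp only [LinearMap.sub_apply, hρ x v, hσ x v, map_sub, map_add]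
  abel

theorem isNijenhuisCompatible_sub_and_iff {ρ σ : A →ₗ[R] Module.End R V} :
    IsNijenhuisCompatible (σ - ρ) N S ∧ IsNijenhuisCompatible σ N S ↔
      IsNijenhuisCompatible ρ N S ∧ IsNijenhuisCompatible σ N S :=
  ⟨fun ⟨hσρ, hσ⟩ => ⟨by simpa using hσ.sub hσρ, hσ⟩, fun ⟨hρ, hσ⟩ => ⟨hσ.sub hρ, hσ⟩⟩

/-- The dual condition for `ρᵀ, Sᵀ`, evaluated at `ξ ∈ V*` and `v ∈ V`, is `ξ` applied to the
Nijenhuis condition for `ρ, S` at `v` (`key`); functionals separate points of a projective module. -/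
theorem isDualNijenhuisCompatible_transpose_comp_iff [Module.Projective R V]
    {ρ : A →ₗ[R] Module.End R V} :
    IsDualNijenhuisCompatible (Module.Dual.transpose ∘ₗ ρ) N S.dualMap ↔
      IsNijenhuisCompatible ρ N S := by
  have key : ∀ x (ξ : Module.Dual R V) v,
      (Module.Dual.transpose (ρ (N x)) (S.dualMap ξ)
          - (S.dualMap (Module.Dual.transpose (ρ (N x)) ξ)
            + Module.Dual.transpose (ρ x) (S.dualMap (S.dualMap ξ))
            - S.dualMap (Module.Dual.transpose (ρ x) (S.dualMap ξ)))) v =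
        ξ (S (ρ (N x) v + ρ x (S v) - S (ρ x v)) - ρ (N x) (S v)) := by
    intro x ξ v
    simp only [LinearMap.sub_apply, LinearMap.add_apply, Module.Dual.transpose_apply,
      LinearMap.dualMap_apply, LinearMap.comp_apply, map_sub, map_add]
    abel
  simp only [IsDualNijenhuisCompatible, IsNijenhuisCompatible, LinearMap.comp_apply]
  refine forall_congr' fun x => ⟨fun h v => ?_, fun h ξ => ?_⟩
  · refine (sub_eq_zero.mp ((Module.forall_dual_apply_eq_zero_iff R _).mp fun ξ => ?_)).symm
    rw [← key, h ξ, sub_self, LinearMap.zero_apply]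
  · refine sub_eq_zero.mp (LinearMap.ext fun v => ?_)
    rw [key, h v, sub_self, map_zero, LinearMap.zero_apply]

end Compatible

theorem dualRepSub_eq_transpose_comp {R A V : Type*} [Field R] [AddCommGroup A] [Module R A]
    [AddCommGroup V] [Module R V] (l r : A →ₗ[R] Module.End R V) :
    dualRepSub l r = Module.Dual.transpose ∘ₗ (r - l) := by
  ext x ξ v
  simp only [dualRepSub, LinearMap.coe_mk, AddHom.coe_mk, LinearMap.sub_apply,
    LinearMap.neg_apply, sub_neg_eq_add, LinearMap.add_apply, LinearMap.dualMap_apply,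
    LinearMap.coe_comp, Function.comp_apply, map_sub, Module.Dual.transpose_apply]
  abel

theorem dualRepNeg_eq_transpose_comp {R A V : Type*} [Field R] [AddCommGroup A] [Module R A]
    [AddCommGroup V] [Module R V] (r : A →ₗ[R] Module.End R V) :
    dualRepNeg r = Module.Dual.transpose ∘ₗ r := by
  ext x ξ v
  simp [dualRepNeg, Module.Dual.transpose_apply]

theorem stmt11_general {F A V : Type*} [Field F]
    [AddCommGroup A] [Module F A]
    [AddCommGroup V] [Module F V]
    (mul : A →ₗ[F] A →ₗ[F] A)
    (l r : A →ₗ[F] Module.End F V)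
    (N : A →ₗ[F] A) (S : V →ₗ[F] V) :
    IsNijPair mul l r N S ↔
      IsDualNijPair mul (dualRepSub l r) (dualRepNeg r) N S.dualMap := by
  change _ ∧ IsNijenhuisCompatible l N S ∧ IsNijenhuisCompatible r N S ↔
    _ ∧ IsDualNijenhuisCompatible _ N S.dualMap ∧ IsDualNijenhuisCompatible _ N S.dualMap
  rw [dualRepSub_eq_transpose_comp, dualRepNeg_eq_transpose_comp,
    isDualNijenhuisCompatible_transpose_comp_iff, isDualNijenhuisCompatible_transpose_comp_iff,
    isNijenhuisCompatible_sub_and_iff]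

/-- `(N, S)` is a Nijenhuis pair on `A` with bimodule `(V; l, r)` iff
`(N, S*)` is a dual-Nijenhuis pair on `A` with the dual bimodule `(V*; l* - r*, -r*)`. -/
theorem stmt11 {F A V : Type*} [Field F] [CharZero F]
    [AddCommGroup A] [Module F A] [FiniteDimensional F A]
    [AddCommGroup V] [Module F V] [FiniteDimensional F V]
    (mul : A →ₗ[F] A →ₗ[F] A) (hA : PreMalcevFn fun x y => mul x y)
    (l r : A →ₗ[F] Module.End F V) (hbim : IsBimodule mul l r)
    (N : A →ₗ[F] A) (S : V →ₗ[F] V) :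
    IsNijPair mul l r N S ↔
      IsDualNijPair mul (dualRepSub l r) (dualRepNeg r) N S.dualMap :=
  stmt11_general mul l r N S
end

section
/- Let (N, S) be a perfect Nijenhuis pair on a finite-dimensional pre-Malcev algebra A with finite-dimensional bimodule (V; ℓ, 𝔯). Then the linear map N + S* : A ⊕ V* → A ⊕ V*, (x, ξ) ↦ (N(x), S*(ξ)), is a Nijenhuis operator on the semi-direct product pre-Malcev algebra A ⋉_{ℓ*−𝔯*, −𝔯*} V*, where S* is the transpose of S. -/
/-!
On `A ⋉ V*` the Nijenhuis identity for `N + S*` splits into the identity for `N` on `A` and,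
on the `V*`-component, the Nijenhuis-pair conditions for `(N, S*)` and the dual actions
`ℓ* - 𝔯*`, `-𝔯*`. These conditions are linear in the action, so it suffices to dualise one
action `ρ`: transposing the pair condition for `ρ` produces the terms `S²ρ_x` and `ρ_x S²`,
and perfectness trades them for `2 Sρ_x S`, which is exactly what the dual condition needs.
-/

open TensorProduct

section NijenhuisPair

variable {F A V : Type*} [CommRing F] [AddCommGroup A] [Module F A] [AddCommGroup V] [Module F V]

/-- The condition on one action `ρ` in the definition of a Nijenhuis pair `(N, S)`. -/
def NijCompat (N : A →ₗ[F] A) (S : V →ₗ[F] V) (ρ : A → Module.End F V) : Prop :=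
  ∀ x v, ρ (N x) (S v) = S (ρ (N x) v + ρ x (S v) - S (ρ x v))

namespace NijCompat

variable {N : A →ₗ[F] A} {S : V →ₗ[F] V} {ρ σ : A → Module.End F V}

theorem neg (h : NijCompat N S ρ) : NijCompat N S fun x => -ρ x := fun x v => by
  simp only [LinearMap.neg_apply, map_neg, map_add, map_sub, h x v]
  abel

theorem sub (hρ : NijCompat N S ρ) (hσ : NijCompat N S σ) :
    NijCompat N S fun x => ρ x - σ x := fun x v => by
  simp only [LinearMap.sub_apply, map_add, map_sub, hρ x v, hσ x v]
  abel

end NijCompat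

theorem nijCompat_neg_dualMap {N : A →ₗ[F] A} {S : V →ₗ[F] V} {ρ : A → Module.End F V}
    (h : NijCompat N S ρ)
    (hperfect : ∀ x v, S (S (ρ x v)) + ρ x (S (S v)) = (2 : F) • S (ρ x (S v))) :
    NijCompat N S.dualMap fun x => -(ρ x).dualMap := fun x ξ => by
  ext v
  have hSS : S (S (ρ x v)) = (2 : F) • S (ρ x (S v)) - ρ x (S (S v)) :=
    eq_sub_of_add_eq (hperfect x v)
  simp only [LinearMap.neg_apply, LinearMap.dualMap_apply', LinearMap.add_apply,
    LinearMap.sub_apply, LinearMap.coe_comp, Function.comp_apply, map_add, map_sub, map_neg,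
    map_smul, h x v, hSS, smul_eq_mul]
  ring

end NijenhuisPair

theorem isNijenhuisFn_sdFn_prodMap {F A V : Type*} [Field F] [AddCommGroup A] [Module F A]
    [AddCommGroup V] [Module F V] {mul : A →ₗ[F] A →ₗ[F] A} {l r : A →ₗ[F] Module.End F V}
    {N : A →ₗ[F] A} {S : V →ₗ[F] V} (hN : IsNijenhuisFn (fun x y => mul x y) N)
    (hl : NijCompat N S l) (hr : NijCompat N S r) :
    IsNijenhuisFn (sdFn mul l r) (N.prodMap S) := by
  rintro ⟨x, ξ⟩ ⟨y, η⟩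
  refine Prod.ext (hN x y) ?_
  simp only [sdFn, LinearMap.prodMap_apply, map_add, map_sub, Prod.snd_add, Prod.snd_sub,
    hl x η, hr y ξ]
  abel

theorem stmt12_general {F A V : Type*} [Field F]
    [AddCommGroup A] [Module F A]
    [AddCommGroup V] [Module F V]
    (mul : A →ₗ[F] A →ₗ[F] A)
    (l r : A →ₗ[F] Module.End F V)
    (N : A →ₗ[F] A) (S : V →ₗ[F] V) (hNS : IsPerfectNijPair mul l r N S) :
    IsNijenhuisFn (sdFn mul (dualRepSub l r) (dualRepNeg r))
      (N.prodMap S.dualMap) := by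
  obtain ⟨⟨hN, hl, hr⟩, hperfect_l, hperfect_r⟩ := hNS
  have hl' := nijCompat_neg_dualMap hl hperfect_l
  have hr' := nijCompat_neg_dualMap hr hperfect_r
  exact isNijenhuisFn_sdFn_prodMap hN (hl'.sub hr') hr'.neg

/-- a perfect Nijenhuis pair `(N, S)` gives a Nijenhuis operator `N + S*`
on the semidirect product `A ⋉_{l*-r*, -r*} V*`. -/
theorem stmt12 {F A V : Type*} [Field F] [CharZero F]
    [AddCommGroup A] [Module F A] [FiniteDimensional F A]
    [AddCommGroup V] [Module F V] [FiniteDimensional F V]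
    (mul : A →ₗ[F] A →ₗ[F] A) (hA : PreMalcevFn fun x y => mul x y)
    (l r : A →ₗ[F] Module.End F V) (hbim : IsBimodule mul l r)
    (N : A →ₗ[F] A) (S : V →ₗ[F] V) (hNS : IsPerfectNijPair mul l r N S) :
    IsNijenhuisFn (sdFn mul (dualRepSub l r) (dualRepNeg r))
      (N.prodMap S.dualMap) :=
  stmt12_general mul l r N S hNS
end

section
/- Let (T, N, S) be an O-N structure or an O-dual-N structure on a pre-Malcev algebra A with bimodule (V; ℓ, 𝔯). Then S is a Nijenhuis operator on the pre-Malcev algebra (V, ⋄^T); that is, S(u) ⋄^T S(v) = S(S(u) ⋄^T v + u ⋄^T S(v) − S(u ⋄^T v)) for all u, v ∈ V. -/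
open TensorProduct

/-! With `N ∘ T = T ∘ S`, the compatibility `⋄^{N∘T} = ⋄^T_S` is equivalent to
`S (u ⋄^T v) = ℓ_{T u} (S v) + 𝔯_{T v} (S u)`. For a Nijenhuis pair, the pair identities at
`x = T u` and `x = T v`, together with `S` applied to this equation, give the Nijenhuis identity
for `S` on `(V, ⋄^T)`. For a dual-Nijenhuis pair one uses the equation at `(u, S v)` and
`(S u, v)` instead; this yields twice the Nijenhuis identity, so `2` must be invertible. -/

section

variable {F A V : Type*} [Field F] [AddCommGroup A] [Module F A] [AddCommGroup V] [Module F V]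
  {l r : A →ₗ[F] Module.End F V} {T : V →ₗ[F] A} {N : A →ₗ[F] A} {S : V →ₗ[F] V}

theorem map_dia_of_dia_comp_eq_diaS (hNT : N ∘ₗ T = T ∘ₗ S)
    (hdia : ∀ u v, dia l r (N ∘ₗ T) u v = diaS l r T S u v) (u v : V) :
    S (dia l r T u v) = l (T u) (S v) + r (T v) (S u) := by
  have h := hdia u v
  simp only [diaS, dia, LinearMap.comp_apply, LinearMap.congr_fun hNT] at h ⊢
  linear_combination (norm := abel) h

theorem isNijenhuisFn_dia_of_isNijPair {mul : A →ₗ[F] A →ₗ[F] A}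
    (hpair : IsNijPair mul l r N S) (hNT : N ∘ₗ T = T ∘ₗ S)
    (hdia : ∀ u v, dia l r (N ∘ₗ T) u v = diaS l r T S u v) :
    IsNijenhuisFn (dia l r T) S := by
  obtain ⟨-, hl, hr⟩ := hpair
  have hNT' (w : V) : T (S w) = N (T w) := (LinearMap.congr_fun hNT w).symm
  intro u v
  have hS := congrArg S (map_dia_of_dia_comp_eq_diaS hNT hdia u v)
  change _ = S (diaS l r T S u v)
  rw [← hdia]
  simp only [dia, LinearMap.comp_apply, hNT', hl, hr, map_add, map_sub] at hS ⊢
  linear_combination (norm := abel) -hS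

theorem isNijenhuisFn_dia_of_isDualNijPair [NeZero (2 : F)] {mul : A →ₗ[F] A →ₗ[F] A}
    (hpair : IsDualNijPair mul l r N S) (hNT : N ∘ₗ T = T ∘ₗ S)
    (hdia : ∀ u v, dia l r (N ∘ₗ T) u v = diaS l r T S u v) :
    IsNijenhuisFn (dia l r T) S := by
  obtain ⟨-, hl, hr⟩ := hpair
  have hNT' (w : V) : T (S w) = N (T w) := (LinearMap.congr_fun hNT w).symm
  intro u v
  have hSv := map_dia_of_dia_comp_eq_diaS hNT hdia u (S v)
  have hSu := map_dia_of_dia_comp_eq_diaS hNT hdia (S u) v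
  change _ = S (diaS l r T S u v)
  rw [← hdia]
  simp only [dia, LinearMap.comp_apply, hNT', map_add] at hSu hSv ⊢
  have h2 : (2 : F) • (l (N (T u)) (S v) + r (N (T v)) (S u))
      = (2 : F) • (S (l (N (T u)) v) + S (r (N (T v)) u)) := by
    rw [two_smul, two_smul]
    linear_combination (norm := abel) hl (T u) v + hr (T v) u - hSu - hSv
  exact smul_right_injective V (two_ne_zero : (2 : F) ≠ 0) h2

end

theorem stmt13_general {F A V : Type*} [Field F] [CharZero F]
    [AddCommGroup A] [Module F A] [AddCommGroup V] [Module F V]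
    (mul : A →ₗ[F] A →ₗ[F] A)
    (l r : A →ₗ[F] Module.End F V)
    (T : V →ₗ[F] A) (N : A →ₗ[F] A) (S : V →ₗ[F] V)
    (h : IsONStruct mul l r T N S ∨ IsODualNStruct mul l r T N S) :
    IsNijenhuisFn (dia l r T) S := by
  rcases h with ⟨-, hpair, hNT, hdia⟩ | ⟨-, hpair, hNT, hdia⟩
  · exact isNijenhuisFn_dia_of_isNijPair hpair hNT hdia
  · exact isNijenhuisFn_dia_of_isDualNijPair hpair hNT hdia

/-- if `(T, N, S)` is an O-N structure or an O-dual-N structure on a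
pre-Malcev algebra `A` with bimodule `(V; l, r)`, then `S` is a Nijenhuis operator on the
pre-Malcev algebra `(V, ⋄^T)`. -/
theorem stmt13 {F A V : Type*} [Field F] [CharZero F]
    [AddCommGroup A] [Module F A] [AddCommGroup V] [Module F V]
    (mul : A →ₗ[F] A →ₗ[F] A) (hA : PreMalcevFn fun x y => mul x y)
    (l r : A →ₗ[F] Module.End F V) (hbim : IsBimodule mul l r)
    (T : V →ₗ[F] A) (N : A →ₗ[F] A) (S : V →ₗ[F] V)
    (h : IsONStruct mul l r T N S ∨ IsODualNStruct mul l r T N S) :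
    IsNijenhuisFn (dia l r T) S :=
  stmt13_general mul l r T N S h
end

section
/- Let (T, N, S) be an O-N structure or an O-dual-N structure on a pre-Malcev algebra A with bimodule (V; ℓ, 𝔯). Then N ∘ T is an O-operator of A associated to (V; ℓ, 𝔯). -/
open TensorProduct

/-! Applying `T` to `u ⋄^T_S v` and using `T ∘ S = N ∘ T` gives
`N (T u) · T v + T u · N (T v) - N (T u · T v)`. Hence, once `u ⋄^{N∘T} v = u ⋄^T_S v`, the
O-operator identity for `N ∘ T` at `u, v` is the Nijenhuis identity for `N` at `T u, T v`. -/

section OOperator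

variable {F A V : Type*} [Field F] [AddCommGroup A] [Module F A] [AddCommGroup V] [Module F V]
  {mul : A →ₗ[F] A →ₗ[F] A} {l r : A →ₗ[F] Module.End F V} {T : V →ₗ[F] A}
  {N : A →ₗ[F] A} {S : V →ₗ[F] V}

theorem IsOOp.map_diaS (hT : IsOOp mul l r T) (hNT : N ∘ₗ T = T ∘ₗ S) (u v : V) :
    T (diaS l r T S u v) = mul (N (T u)) (T v) + mul (T u) (N (T v)) - N (mul (T u) (T v)) := by
  have hTdia : ∀ u v, T (dia l r T u v) = mul (T u) (T v) := fun u v => (hT u v).symm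
  have hTS : ∀ w, T (S w) = N (T w) := fun w => (LinearMap.congr_fun hNT w).symm
  simp only [diaS, map_add, map_sub, hTdia, hTS]

theorem IsOOp.comp_of_isNijenhuis (hT : IsOOp mul l r T)
    (hN : IsNijenhuisFn (fun x y => mul x y) N) (hNT : N ∘ₗ T = T ∘ₗ S)
    (hdia : ∀ u v : V, dia l r (N ∘ₗ T) u v = diaS l r T S u v) :
    IsOOp mul l r (N ∘ₗ T) := by
  intro u v
  have hdia' : l (N (T u)) v + r (N (T v)) u = diaS l r T S u v := hdia u v
  rw [LinearMap.comp_apply, LinearMap.comp_apply, hdia', LinearMap.comp_apply,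
    hT.map_diaS hNT]
  exact hN (T u) (T v)

end OOperator

theorem stmt14_general {F A V : Type*} [Field F]
    [AddCommGroup A] [Module F A] [AddCommGroup V] [Module F V]
    (mul : A →ₗ[F] A →ₗ[F] A)
    (l r : A →ₗ[F] Module.End F V)
    (T : V →ₗ[F] A) (N : A →ₗ[F] A) (S : V →ₗ[F] V)
    (h : IsONStruct mul l r T N S ∨ IsODualNStruct mul l r T N S) :
    IsOOp mul l r (N ∘ₗ T) := by
  obtain ⟨hT, ⟨hN, -⟩, hNT, hdia⟩ | ⟨hT, ⟨hN, -⟩, hNT, hdia⟩ := h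
  · exact hT.comp_of_isNijenhuis hN hNT hdia
  · exact hT.comp_of_isNijenhuis hN hNT hdia

/-- if `(T, N, S)` is an O-N structure or an O-dual-N structure on a
pre-Malcev algebra `A` with bimodule `(V; l, r)`, then `N ∘ T` is an O-operator. -/
theorem stmt14 {F A V : Type*} [Field F] [CharZero F]
    [AddCommGroup A] [Module F A] [AddCommGroup V] [Module F V]
    (mul : A →ₗ[F] A →ₗ[F] A) (hA : PreMalcevFn fun x y => mul x y)
    (l r : A →ₗ[F] Module.End F V) (hbim : IsBimodule mul l r)
    (T : V →ₗ[F] A) (N : A →ₗ[F] A) (S : V →ₗ[F] V)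
    (h : IsONStruct mul l r T N S ∨ IsODualNStruct mul l r T N S) :
    IsOOp mul l r (N ∘ₗ T) :=
  stmt14_general mul l r T N S h
end

section
/- Let (T, N, S) be an O-N structure on a pre-Malcev algebra A with bimodule (V; ℓ, 𝔯). If T is invertible, then (T, N, S) is an O-dual-N structure on A; in particular, the Nijenhuis pair (N, S) is then a dual-Nijenhuis pair. -/
open TensorProduct

/-! With `T` surjective, the compatibility `u ⋄^{N∘T} v = u ⋄^T_S v` together with the Nijenhuis
pair conditions forces `S² ∘ ℓ_x + ℓ_x ∘ S² = 2 S ∘ ℓ_x ∘ S` (and likewise for `𝔯`), i.e. `(N, S)`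
is a perfect Nijenhuis pair; subtracting this identity from the Nijenhuis pair condition turns it
into the dual-Nijenhuis pair condition. -/

section ONStructure

variable {F A V : Type*} [Field F] [AddCommGroup A] [Module F A] [AddCommGroup V] [Module F V]
  {l r : A →ₗ[F] Module.End F V} {T : V →ₗ[F] A} {N : A →ₗ[F] A} {S : V →ₗ[F] V}

theorem IsPerfectNijPair.isDualNijPair {mul : A →ₗ[F] A →ₗ[F] A}
    (h : IsPerfectNijPair mul l r N S) : IsDualNijPair mul l r N S := by
  obtain ⟨⟨hN, hl, hr⟩, hpl, hpr⟩ := h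
  refine ⟨hN, fun x v => ?_, fun x v => ?_⟩
  · have hlx := hl x v
    simp only [map_add, map_sub] at hlx
    linear_combination (norm := module) hlx - hpl x v
  · have hrx := hr x v
    simp only [map_add, map_sub] at hrx
    linear_combination (norm := module) hrx - hpr x v

theorem l_S_add_r_S_eq_S_dia (hNT : N ∘ₗ T = T ∘ₗ S)
    (hdia : ∀ u v : V, dia l r (N ∘ₗ T) u v = diaS l r T S u v) (u v : V) :
    l (T u) (S v) + r (T v) (S u) = S (dia l r T u v) := by
  have h := hdia u v
  simp only [dia, diaS, hNT, LinearMap.comp_apply, map_add] at h ⊢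
  linear_combination (norm := abel1) -h

/-- Applied with `ℓ` and `𝔯` exchanged, this also gives the `𝔯`-half of perfectness. -/
theorem S_S_l_add_l_S_S_eq (hNT : N ∘ₗ T = T ∘ₗ S)
    (hstar : ∀ u v : V, l (T u) (S v) + r (T v) (S u) = S (l (T u) v + r (T v) u))
    (hr : ∀ (x : A) (v : V), r (N x) (S v) = S (r (N x) v + r x (S v) - S (r x v)))
    (u v : V) :
    S (S (l (T u) v)) + l (T u) (S (S v)) = (2 : F) • S (l (T u) (S v)) := by
  have hNTv : N (T v) = T (S v) := LinearMap.congr_fun hNT v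
  have hstarSv := hstar u (S v)
  have hrTv := hr (T v) u
  have hstarS := congrArg S (hstar u v)
  rw [hNTv] at hrTv
  simp only [map_add, map_sub] at hstarSv hrTv hstarS
  linear_combination (norm := module) hstarSv - hrTv - hstarS

theorem IsONStruct.isPerfectNijPair {mul : A →ₗ[F] A →ₗ[F] A}
    (h : IsONStruct mul l r T N S) (hT : Function.Surjective T) :
    IsPerfectNijPair mul l r N S := by
  obtain ⟨-, hNS, hNT, hdia⟩ := h
  obtain ⟨hl, hr⟩ := hNS.2
  have hstar := l_S_add_r_S_eq_S_dia hNT hdia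
  have hstar' : ∀ u v : V, r (T u) (S v) + l (T v) (S u) = S (r (T u) v + l (T v) u) :=
    fun u v => by rw [add_comm, hstar v u, dia, add_comm]
  refine ⟨hNS, fun x v => ?_, fun x v => ?_⟩
  · obtain ⟨u, rfl⟩ := hT x
    exact S_S_l_add_l_S_S_eq hNT hstar hr u v
  · obtain ⟨u, rfl⟩ := hT x
    exact S_S_l_add_l_S_S_eq hNT hstar' hl u v

end ONStructure

theorem stmt15_general {F A V : Type*} [Field F]
    [AddCommGroup A] [Module F A] [AddCommGroup V] [Module F V]
    (mul : A →ₗ[F] A →ₗ[F] A)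
    (l r : A →ₗ[F] Module.End F V)
    (T : V →ₗ[F] A) (N : A →ₗ[F] A) (S : V →ₗ[F] V)
    (h : IsONStruct mul l r T N S) (hT : Function.Bijective T) :
    IsODualNStruct mul l r T N S ∧ IsDualNijPair mul l r N S := by
  have hdual := (h.isPerfectNijPair hT.surjective).isDualNijPair
  obtain ⟨hO, -, hNT, hdia⟩ := h
  exact ⟨⟨hO, hdual, hNT, hdia⟩, hdual⟩

/-- if `(T, N, S)` is an O-N structure with `T` invertible, then it is an
O-dual-N structure; in particular `(N, S)` is a dual-Nijenhuis pair. -/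
theorem stmt15 {F A V : Type*} [Field F] [CharZero F]
    [AddCommGroup A] [Module F A] [AddCommGroup V] [Module F V]
    (mul : A →ₗ[F] A →ₗ[F] A) (hA : PreMalcevFn fun x y => mul x y)
    (l r : A →ₗ[F] Module.End F V) (hbim : IsBimodule mul l r)
    (T : V →ₗ[F] A) (N : A →ₗ[F] A) (S : V →ₗ[F] V)
    (h : IsONStruct mul l r T N S) (hT : Function.Bijective T) :
    IsODualNStruct mul l r T N S ∧ IsDualNijPair mul l r N S :=
  stmt15_general mul l r T N S h hT
end
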